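/- Let n ≥ 1, let u be a smooth strictly convex function on a domain Ω ⊆ ℝⁿ, let C > 0, and let T(ξ) = Aξ + b be an invertible affine transformation of ℝⁿ. Define ũ on T(Ω) by ũ(Tξ) = u(ξ)/C. Then ũ is smooth and strictly convex and Φ_{ũ}(Tξ) = C · Φ_u(ξ) for all ξ ∈ Ω, where for a strictly convex function w one sets ρ_w = (det D²w)^{1/(n+2)} and Φ_w = (1/ρ_w²) Σ_{i,j} w^{ij}(∂ρ_w/∂ξ_i)(∂ρ_w/∂ξ_j), with (w^{ij}) the inverse of the Hessian D²w. -/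

import Mathlib

noncomputable section

/-- The `i`-th partial derivative of a function on `ℝⁿ`. -/
def pd {n : ℕ} (i : Fin n) (f : (Fin n → ℝ) → ℝ) : (Fin n → ℝ) → ℝ :=
  fun x => fderiv ℝ f x (Pi.single i 1)

/-- The Hessian matrix `(∂²f/∂x_i∂x_j)`. -/
def hess {n : ℕ} (f : (Fin n → ℝ) → ℝ) (x : Fin n → ℝ) : Matrix (Fin n) (Fin n) ℝ :=
  Matrix.of fun i j => pd i (pd j f) x

/-- `ρ_w = (det D²w)^{1/(n+2)}`. -/
def rhoU {n : ℕ} (w : (Fin n → ℝ) → ℝ) (x : Fin n → ℝ) : ℝ :=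
  (hess w x).det ^ ((1 : ℝ) / (n + 2))

/-- `Φ_w = (1/ρ_w²) Σ w^{ij} (∂ρ_w/∂ξ_i)(∂ρ_w/∂ξ_j)`. -/
def PhiU {n : ℕ} (w : (Fin n → ℝ) → ℝ) (x : Fin n → ℝ) : ℝ :=
  (1 / (rhoU w x) ^ 2) *
    ∑ i : Fin n, ∑ j : Fin n, (hess w x)⁻¹ i j * pd i (rhoU w) x * pd j (rhoU w) x

/-! The function `ũ` agrees near `T(Ω)` with `C⁻¹ · (u ∘ T⁻¹)`, and `Φ` only depends on the germ of
a function, so it suffices to know how `Φ` transforms under multiplication by a constant `c > 0`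
and under composition with an invertible affine map `z ↦ B z + d`. In the first case the Hessian
is multiplied by `c` and `ρ` by `c^{n/(n+2)}`; in the second the Hessian becomes `Bᵀ H B` and `ρ` is
multiplied by `(det B)^{2/(n+2)}`. In both cases the constant factor of `ρ` cancels between `1/ρ²`
and the two gradient factors, and what is left is `c⁻¹ Φ`, resp. `Φ`: the inverse Hessian
`B⁻¹ H⁻¹ B⁻ᵀ` absorbs the `Bᵀ` that the chain rule puts on `∇ρ`. -/

open Matrix Filter Topology
open scoped ContDiff

/-- At a negative base `Real.rpow` is `exp (log y * z) * cos (z * π)`, which is still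
multiplicative in a positive factor. -/
theorem Real.mul_rpow_of_pos_left {x : ℝ} (hx : 0 < x) (y z : ℝ) :
    (x * y) ^ z = x ^ z * y ^ z := by
  rcases le_or_gt 0 y with hy | hy
  · exact Real.mul_rpow hx.le hy
  · rw [Real.rpow_def_of_neg (mul_neg_of_pos_of_neg hx hy), Real.rpow_def_of_neg hy,
      Real.rpow_def_of_pos hx, Real.log_mul hx.ne' hy.ne, add_mul, Real.exp_add, mul_assoc]

namespace Matrix

variable {m R K : Type*} [Fintype m]

lemma sum_sum_mul_mul_eq_dotProduct_mulVec [CommSemiring R] (N : Matrix m m R) (p : m → R) :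
    ∑ i, ∑ j, N i j * p i * p j = p ⬝ᵥ (N *ᵥ p) := by
  simp only [dotProduct, mulVec, Finset.mul_sum]
  exact Finset.sum_congr rfl fun i _ => Finset.sum_congr rfl fun j _ => by ring

lemma inv_smul_of_ne_zero [DecidableEq m] [Field K] {c : K} (hc : c ≠ 0) (M : Matrix m m K) :
    (c • M)⁻¹ = c⁻¹ • M⁻¹ := by
  by_cases hM : IsUnit M.det
  · exact inv_smul' M (Units.mk0 c hc) hM
  · have hcM : ¬IsUnit (c • M).det := by
      rwa [det_smul, IsUnit.mul_iff, and_iff_right ((Ne.isUnit hc).pow _)]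
    rw [nonsing_inv_apply_not_isUnit _ hM, nonsing_inv_apply_not_isUnit _ hcM, smul_zero]

lemma dotProduct_vecMul_conj [DecidableEq m] [CommRing R] {B : Matrix m m R} (hB : IsUnit B.det)
    (N : Matrix m m R) (p : m → R) :
    (p ᵥ* B) ⬝ᵥ ((B⁻¹ * N * Bᵀ⁻¹) *ᵥ (p ᵥ* B)) = p ⬝ᵥ (N *ᵥ p) := by
  have hBt : IsUnit Bᵀ.det := by rwa [det_transpose]
  have hp : Bᵀ⁻¹ *ᵥ (p ᵥ* B) = p := by
    rw [← mulVec_transpose, mulVec_mulVec, nonsing_inv_mul _ hBt, one_mulVec]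
  rw [← mulVec_mulVec, hp, dotProduct_mulVec, vecMul_vecMul, ← mul_assoc, mul_nonsing_inv _ hB,
    one_mul, ← dotProduct_mulVec]

lemma leftInverse_mulVec_add [DecidableEq m] [CommRing R] {A : Matrix m m R} (hA : IsUnit A.det)
    (b : m → R) : Function.LeftInverse (fun y => A⁻¹ *ᵥ y + -(A⁻¹ *ᵥ b)) (fun x => A *ᵥ x + b) :=
  fun x => by simp [mulVec_add, mulVec_mulVec, nonsing_inv_mul A hA]

lemma rightInverse_mulVec_add [DecidableEq m] [CommRing R] {A : Matrix m m R} (hA : IsUnit A.det)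
    (b : m → R) : Function.RightInverse (fun y => A⁻¹ *ᵥ y + -(A⁻¹ *ᵥ b)) (fun x => A *ᵥ x + b) :=
  fun y => by simp [mulVec_add, mulVec_neg, mulVec_mulVec, mul_nonsing_inv A hA]

end Matrix

lemma ContinuousLinearMap.apply_eq_sum_mul_apply_single {ι : Type*} [Fintype ι] [DecidableEq ι]
    (φ : (ι → ℝ) →L[ℝ] ℝ) (w : ι → ℝ) : φ w = ∑ l, w l * φ (Pi.single l 1) := by
  conv_lhs => rw [← Finset.univ_sum_single w]
  refine (map_sum φ _ _).trans (Finset.sum_congr rfl fun l _ => ?_)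
  rw [← smul_eq_mul, ← map_smul, ← Pi.single_smul, smul_eq_mul, mul_one]

section PartialDerivative

variable {n : ℕ} {f g : (Fin n → ℝ) → ℝ} {x : Fin n → ℝ}

lemma pd_eq_of_eventuallyEq (h : f =ᶠ[𝓝 x] g) (i : Fin n) : pd i f x = pd i g x := by
  simp only [pd, h.fderiv_eq]

lemma pd_eventuallyEq (h : f =ᶠ[𝓝 x] g) (i : Fin n) : pd i f =ᶠ[𝓝 x] pd i g :=
  h.eventuallyEq_nhds.mono fun _ hy => pd_eq_of_eventuallyEq hy i

lemma hess_eventuallyEq (h : f =ᶠ[𝓝 x] g) : hess f =ᶠ[𝓝 x] hess g := by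
  have hij : ∀ᶠ y in 𝓝 x, ∀ i j, pd i (pd j f) y = pd i (pd j g) y :=
    eventually_all.2 fun i => eventually_all.2 fun j => pd_eventuallyEq (pd_eventuallyEq h j) i
  exact hij.mono fun y hy => Matrix.ext hy

lemma rhoU_eventuallyEq (h : f =ᶠ[𝓝 x] g) : rhoU f =ᶠ[𝓝 x] rhoU g :=
  (hess_eventuallyEq h).mono fun y hy => by simp only [rhoU, hy]

lemma PhiU_eq_of_eventuallyEq (h : f =ᶠ[𝓝 x] g) : PhiU f x = PhiU g x := by
  simp only [PhiU, (hess_eventuallyEq h).eq_of_nhds, (rhoU_eventuallyEq h).eq_of_nhds,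
    pd_eq_of_eventuallyEq (rhoU_eventuallyEq h)]

lemma pd_const_mul (c : ℝ) (f : (Fin n → ℝ) → ℝ) (i : Fin n) :
    pd i (fun z => c * f z) = fun x => c * pd i f x := by
  funext x
  change fderiv ℝ (c • f) x _ = _
  rw [fderiv_const_smul_field]
  rfl

lemma pd_sum_const_mul (c : Fin n → ℝ) (f : Fin n → (Fin n → ℝ) → ℝ)
    (hf : ∀ k, DifferentiableAt ℝ (f k) x) (i : Fin n) :
    pd i (fun z => ∑ k, c k * f k z) x = ∑ k, c k * pd i (f k) x := by
  simp only [pd, fderiv_fun_sum fun k _ => (hf k).const_mul (c k), fderiv_const_mul (hf _),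
    _root_.sum_apply, _root_.smul_apply, smul_eq_mul]

lemma ContDiffOn.differentiableAt_pd {U : Set (Fin n → ℝ)} (hf : ContDiffOn ℝ 2 f U)
    (hU : IsOpen U) (hx : x ∈ U) (i : Fin n) : DifferentiableAt ℝ (pd i f) x := by
  have hdf : ContDiffOn ℝ 1 (fderiv ℝ f) U := hf.fderiv_of_isOpen hU (by norm_num)
  exact ((hdf.contDiffAt (hU.mem_nhds hx)).differentiableAt one_ne_zero).clm_apply
    (differentiableAt_const _)

end PartialDerivative

section ConstMul

variable {n : ℕ} (f : (Fin n → ℝ) → ℝ)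

lemma hess_const_mul (c : ℝ) (x : Fin n → ℝ) : hess (fun z => c * f z) x = c • hess f x := by
  ext i j
  simp only [hess, of_apply, Matrix.smul_apply, smul_eq_mul, pd_const_mul]

lemma rhoU_const_mul {c : ℝ} (hc : 0 < c) :
    rhoU (fun z => c * f z) = fun x => (c ^ n) ^ ((1 : ℝ) / (n + 2)) * rhoU f x := by
  funext x
  rw [rhoU, hess_const_mul, det_smul, Fintype.card_fin,
    Real.mul_rpow_of_pos_left (pow_pos hc n), rhoU]

lemma PhiU_const_mul {c : ℝ} (hc : 0 < c) (x : Fin n → ℝ) :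
    PhiU (fun z => c * f z) x = c⁻¹ * PhiU f x := by
  set k : ℝ := (c ^ n) ^ ((1 : ℝ) / (n + 2))
  have hk : k ≠ 0 := (Real.rpow_pos_of_pos (pow_pos hc n) _).ne'
  simp only [PhiU, hess_const_mul, rhoU_const_mul f hc, pd_const_mul,
    inv_smul_of_ne_zero hc.ne', Matrix.smul_apply, smul_eq_mul, Finset.mul_sum]
  refine Finset.sum_congr rfl fun i _ => Finset.sum_congr rfl fun j _ => ?_
  field_simp

section Affine

variable {n : ℕ} {B : Matrix (Fin n) (Fin n) ℝ} (f : (Fin n → ℝ) → ℝ) (d : Fin n → ℝ)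

lemma pd_comp_affine (hB : IsUnit B.det) (i : Fin n) :
    pd i (fun z => f (B *ᵥ z + d)) = fun y => ∑ l, B l i * pd l f (B *ᵥ y + d) := by
  funext y
  let L : (Fin n → ℝ) ≃L[ℝ] (Fin n → ℝ) :=
    (B.toLinearEquiv' (invertibleOfIsUnitDet B hB)).toContinuousLinearEquiv
  have hL : ∀ z, L z = B *ᵥ z := fun _ => rfl
  have hcomp : (fun z => f (B *ᵥ z + d)) = (fun w => f (w + d)) ∘ L := by
    funext z; simp only [Function.comp_apply, hL]
  have hLi : L (Pi.single i 1) = fun l => B l i := by rw [hL, mulVec_single_one]; rfl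
  rw [pd, hcomp, L.comp_right_fderiv, fderiv_comp_add_right, ContinuousLinearMap.comp_apply,
    ContinuousLinearEquiv.coe_coe, hLi, ContinuousLinearMap.apply_eq_sum_mul_apply_single]
  rfl

lemma hess_comp_affine (hB : IsUnit B.det) {y : Fin n → ℝ}
    (hf : ∀ l, DifferentiableAt ℝ (pd l f) (B *ᵥ y + d)) :
    hess (fun z => f (B *ᵥ z + d)) y = Bᵀ * hess f (B *ᵥ y + d) * B := by
  ext i j
  rw [hess, of_apply, pd_comp_affine f d hB j,
    pd_comp_affine (fun x => ∑ l, B l j * pd l f x) d hB i]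
  simp only [pd_sum_const_mul _ _ hf, mul_apply, transpose_apply, Finset.mul_sum,
    Finset.sum_mul]
  rw [Finset.sum_comm]
  exact Finset.sum_congr rfl fun _ _ => Finset.sum_congr rfl fun _ _ => by rw [hess, of_apply]; ring

lemma rhoU_comp_affine (hB : IsUnit B.det) {y : Fin n → ℝ}
    (hf : ∀ l, DifferentiableAt ℝ (pd l f) (B *ᵥ y + d)) :
    rhoU (fun z => f (B *ᵥ z + d)) y =
      (B.det ^ 2) ^ ((1 : ℝ) / (n + 2)) * rhoU f (B *ᵥ y + d) := by
  have hdet : (Bᵀ * hess f (B *ᵥ y + d) * B).det = B.det ^ 2 * (hess f (B *ᵥ y + d)).det := by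
    rw [det_mul, det_mul, det_transpose]; ring
  have hpos : 0 < B.det ^ 2 := by have := hB.ne_zero; positivity
  rw [rhoU, rhoU, hess_comp_affine f d hB hf, hdet, Real.mul_rpow_of_pos_left hpos]

lemma PhiU_comp_affine (hB : IsUnit B.det) {y : Fin n → ℝ}
    (hf : ∀ᶠ x in 𝓝 (B *ᵥ y + d), ∀ l, DifferentiableAt ℝ (pd l f) x) :
    PhiU (fun z => f (B *ᵥ z + d)) y = PhiU f (B *ᵥ y + d) := by
  set k : ℝ := (B.det ^ 2) ^ ((1 : ℝ) / (n + 2))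
  have hk : k ≠ 0 := (Real.rpow_pos_of_pos (by have := hB.ne_zero; positivity) _).ne'
  have hS : Continuous fun z => B *ᵥ z + d := by fun_prop
  have hρ : rhoU (fun z => f (B *ᵥ z + d)) =ᶠ[𝓝 y] fun z => k * rhoU f (B *ᵥ z + d) :=
    (hS.tendsto y).eventually hf |>.mono fun z hz => rhoU_comp_affine f d hB hz
  have hgrad : (fun i => pd i (rhoU fun z => f (B *ᵥ z + d)) y) =
      k • ((fun l => pd l (rhoU f) (B *ᵥ y + d)) ᵥ* B) := by
    funext i
    rw [pd_eq_of_eventuallyEq hρ, pd_const_mul, pd_comp_affine _ d hB]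
    simp only [Pi.smul_apply, vecMul, dotProduct, smul_eq_mul, mul_comm]
  rw [PhiU, PhiU, sum_sum_mul_mul_eq_dotProduct_mulVec, sum_sum_mul_mul_eq_dotProduct_mulVec,
    hgrad, hess_comp_affine f d hB hf.self_of_nhds, hρ.self_of_nhds, Matrix.mul_inv_rev,
    Matrix.mul_inv_rev, ← mul_assoc, mulVec_smul, dotProduct_smul, smul_dotProduct,
    dotProduct_vecMul_conj hB, smul_eq_mul, smul_eq_mul]
  field_simp

end Affine

theorem Phi_affine_rescaling_general (n : ℕ)
    (Ω : Set (Fin n → ℝ)) (hΩo : IsOpen Ω)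
    (u : (Fin n → ℝ) → ℝ) (hu : ContDiffOn ℝ (⊤ : ℕ∞) u Ω)
    (hconv : ∀ ξ ∈ Ω, (hess u ξ).PosDef)
    (C : ℝ) (hC : 0 < C)
    (A : Matrix (Fin n) (Fin n) ℝ) (hA : IsUnit A.det) (b : Fin n → ℝ)
    (T : (Fin n → ℝ) → (Fin n → ℝ)) (hT : ∀ ξ, T ξ = A.mulVec ξ + b)
    (ut : (Fin n → ℝ) → ℝ) (hut : ∀ ξ ∈ Ω, ut (T ξ) = u ξ / C) :
    ContDiffOn ℝ (⊤ : ℕ∞) ut (T '' Ω) ∧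
      (∀ y ∈ T '' Ω, (hess ut y).PosDef) ∧
      ∀ ξ ∈ Ω, PhiU ut (T ξ) = C * PhiU u ξ := by
  set B := A⁻¹
  set S : (Fin n → ℝ) → (Fin n → ℝ) := fun y => B *ᵥ y + -(B *ᵥ b)
  have hTeq : T = fun ξ => A *ᵥ ξ + b := funext hT
  have hST : Function.LeftInverse S T := hTeq ▸ leftInverse_mulVec_add hA b
  have hTS : Function.RightInverse S T := hTeq ▸ rightInverse_mulVec_add hA b
  have hB : IsUnit B.det := isUnit_nonsing_inv_det A hA
  have hS : ContDiff ℝ ∞ S := (mulVecLin B).toContinuousLinearMap.contDiff.add contDiff_const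
  have hTΩ : T '' Ω = S ⁻¹' Ω := congrFun (Set.image_eq_preimage_of_inverse hST hTS) Ω
  have hSΩ : Set.MapsTo S (T '' Ω) Ω := hTΩ ▸ Set.mapsTo_preimage S Ω
  have hopen : IsOpen (T '' Ω) := hTΩ ▸ hΩo.preimage hS.continuous
  have hdiff : ∀ x ∈ Ω, ∀ l, DifferentiableAt ℝ (pd l u) x := fun x hx =>
    (hu.of_le ENat.LEInfty.out).differentiableAt_pd hΩo hx
  set v : (Fin n → ℝ) → ℝ := fun y => C⁻¹ * u (S y)
  have hv : ∀ y ∈ T '' Ω, ut =ᶠ[𝓝 y] v := fun y hy =>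
    eventually_of_mem (hopen.mem_nhds hy) fun _ ⟨ξ, hξ, hξy⟩ => by
      simp [v, ← hξy, hut ξ hξ, hST ξ, div_eq_inv_mul]
  refine ⟨?_, fun y hy => ?_, fun ξ hξ => ?_⟩
  · exact (contDiffOn_const.mul (hu.comp hS.contDiffOn hSΩ)).congr fun y hy =>
      (hv y hy).eq_of_nhds
  · rw [(hess_eventuallyEq (hv y hy)).eq_of_nhds, hess_const_mul,
      hess_comp_affine u _ hB (hdiff _ (hSΩ hy)), ← conjTranspose_eq_transpose_of_trivial]
    exact ((hconv _ (hSΩ hy)).conjTranspose_mul_mul_same (mulVec_injective_of_isUnit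
      ((isUnit_iff_isUnit_det B).2 hB))).smul (inv_pos.2 hC)
  · have hdiffS : ∀ᶠ x in 𝓝 (S (T ξ)), ∀ l, DifferentiableAt ℝ (pd l u) x :=
      (hST ξ).symm ▸ eventually_of_mem (hΩo.mem_nhds hξ) hdiff
    rw [PhiU_eq_of_eventuallyEq (hv _ ⟨ξ, hξ, rfl⟩), PhiU_const_mul _ (inv_pos.2 hC), inv_inv,
      PhiU_comp_affine u _ hB hdiffS]
    exact congrArg (C * PhiU u ·) (hST ξ)

/-- Rescaling behaviour of `Φ` under invertible affine transformations:
if `ũ(Tξ) = u(ξ)/C` on `T(Ω)`, then `ũ` is smooth strictly convex and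
`Φ_{ũ}(Tξ) = C·Φ_u(ξ)` on `Ω`. -/
theorem Phi_affine_rescaling (n : ℕ) (hn : 1 ≤ n)
    (Ω : Set (Fin n → ℝ)) (hΩo : IsOpen Ω)
    (u : (Fin n → ℝ) → ℝ) (hu : ContDiffOn ℝ (⊤ : ℕ∞) u Ω)
    (hconv : ∀ ξ ∈ Ω, (hess u ξ).PosDef)
    (C : ℝ) (hC : 0 < C)
    (A : Matrix (Fin n) (Fin n) ℝ) (hA : IsUnit A.det) (b : Fin n → ℝ)
    (T : (Fin n → ℝ) → (Fin n → ℝ)) (hT : ∀ ξ, T ξ = A.mulVec ξ + b)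
    (ut : (Fin n → ℝ) → ℝ) (hut : ∀ ξ ∈ Ω, ut (T ξ) = u ξ / C) :
    ContDiffOn ℝ (⊤ : ℕ∞) ut (T '' Ω) ∧
      (∀ y ∈ T '' Ω, (hess ut y).PosDef) ∧
      ∀ ξ ∈ Ω, PhiU ut (T ξ) = C * PhiU u ξ :=
  Phi_affine_rescaling_general n Ω hΩo u hu hconv C hC A hA b T hT ut hut
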